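/- Let A = P_z + (1/2)P_{−z} on ℂ² and Φ(ρ) = A^{1/2} ρ A^{1/2}. There exist no channel Λ, state ξ₁, and operation Φ' with Φ'*(I) = P_x such that both Λ − Φ and Λ − Φ' are completely positive. Equivalently, the projection P_x and the Lüders operation Φ of A are strongly incompatible. -/

import Mathlib

open Matrix ComplexOrder
open scoped Kronecker

noncomputable section

/-- `n × n` complex matrices, modelling operators on an `n`-dimensional Hilbert space. -/
abbrev Mat (n : ℕ) := Matrix (Fin n) (Fin n) ℂ

/-- An effect: an operator `E` with `0 ≤ E ≤ I` in the Loewner order. -/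
def IsEffect {n : ℕ} (E : Mat n) : Prop := E.PosSemidef ∧ ((1 : Mat n) - E).PosSemidef

/-- The extension `Φ ⊗ id_k` of a map between matrix algebras, acting on block matrices. -/
def cpExt {m n : ℕ} (Φ : Mat m →ₗ[ℂ] Mat n) (k : ℕ)
    (M : Matrix (Fin m × Fin k) (Fin m × Fin k) ℂ) :
    Matrix (Fin n × Fin k) (Fin n × Fin k) ℂ :=
  Matrix.of fun p q => Φ (Matrix.of fun a b => M (a, p.2) (b, q.2)) p.1 q.1

/-- Complete positivity of a linear map between matrix algebras. -/
def IsCP {m n : ℕ} (Φ : Mat m →ₗ[ℂ] Mat n) : Prop :=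
  ∀ (k : ℕ) (M : Matrix (Fin m × Fin k) (Fin m × Fin k) ℂ),
    M.PosSemidef → (cpExt Φ k M).PosSemidef

/-- Lüders-type conjugation map `ρ ↦ A * ρ * A` (for self-adjoint `A`). -/
def luders {n : ℕ} (A : Mat n) : Mat n →ₗ[ℂ] Mat n :=
  (LinearMap.mulRight ℂ A).comp (LinearMap.mulLeft ℂ A)

/-- Pauli `σ_x`. -/
def sx : Mat 2 := !![0, 1; 1, 0]
/-- Pauli `σ_z`. -/
def sz : Mat 2 := !![1, 0; 0, -1]

/-- `P_x = (I + σ_x)/2`. -/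
def Px : Mat 2 := ((1 : ℂ) / 2) • ((1 : Mat 2) + sx)
/-- `P_z = (I + σ_z)/2`. -/
def Pz : Mat 2 := ((1 : ℂ) / 2) • ((1 : Mat 2) + sz)
/-- `P_{-z} = (I - σ_z)/2`. -/
def Pnz : Mat 2 := ((1 : ℂ) / 2) • ((1 : Mat 2) - sz)

/-- `A^{1/2} = P_z + (1/√2)·P_{-z}`, the square root of `A = P_z + (1/2)·P_{-z}`. -/
def sqrtA : Mat 2 := Pz + ((Real.sqrt 2 : ℂ))⁻¹ • Pnz

/-!
An operation `Ψ` with `Ψ*(I) = E` annihilates `|v⟩⟨w|` and `|w⟩⟨v|` whenever `E v = 0`.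
Both `Φ'` (with `E = P_x`) and `Λ - Φ'` (with `E = I - P_x`) have rank-one duals diagonal in
the `σ_x` eigenbasis, in which `σ_z = P_z - P_{-z}` is off-diagonal; hence `Λ(P_z) = Λ(P_{-z})`.
On the other hand `Λ ≥ Φ` gives `Λ(P_z) ≥ P_z` and `Λ(P_{-z}) ≥ P_{-z}/2`, so this common
state would have trace at least `3/2`, whereas `Λ` preserves trace.
-/

namespace Matrix.PosSemidef

variable {n 𝕜 : Type*} [Fintype n] [DecidableEq n] [RCLike 𝕜] {A : Matrix n n 𝕜}

theorem apply_eq_zero_of_diag_eq_zero (hA : A.PosSemidef) {i : n} (hi : A i i = 0) (j : n) :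
    A j i = 0 := by
  have hcol := (hA.dotProduct_mulVec_zero_iff (Pi.single i 1)).mp (by simpa using hi)
  simpa using congrFun hcol j

theorem apply_eq_zero_of_diag_eq_zero' (hA : A.PosSemidef) {i : n} (hi : A i i = 0) (j : n) :
    A i j = 0 := by
  rw [← hA.isHermitian.apply i j, hA.apply_eq_zero_of_diag_eq_zero hi, star_zero]

end Matrix.PosSemidef

namespace IsCP

variable {m n : ℕ} {Ψ : Mat m →ₗ[ℂ] Mat n}

theorem posSemidef_map (hΨ : IsCP Ψ) {ρ : Mat m} (hρ : ρ.PosSemidef) : (Ψ ρ).PosSemidef :=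
  (hΨ 1 (ρ.submatrix Prod.fst Prod.fst) (hρ.submatrix _)).submatrix (·, 0)

/-- The block matrix `[vv* vw*; wv* ww*]` is positive, hence so is its image under `Ψ ⊗ id₂`;
its `(v, v)` block is positive with trace `v* E v = 0`, so it vanishes, and with it the
off-diagonal blocks. -/
theorem map_vecMulVec_eq_zero (hΨ : IsCP Ψ) {E : Mat m}
    (hE : ∀ ρ, (Ψ ρ).trace = (ρ * E).trace) {v : Fin m → ℂ} (hv : E *ᵥ v = 0)
    (w : Fin m → ℂ) :
    Ψ (vecMulVec v (star w)) = 0 ∧ Ψ (vecMulVec w (star v)) = 0 := by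
  set z : Fin m × Fin 2 → ℂ := fun p => ![v, w] p.2 p.1
  have hC := hΨ 2 _ (posSemidef_vecMulVec_self_star z)
  have hvv : Ψ (vecMulVec v (star v)) = 0 := by
    have hpsd : (Ψ (vecMulVec v (star v))).PosSemidef := hC.submatrix (·, 0)
    refine hpsd.trace_eq_zero_iff.mp ?_
    simp only [hE, trace_mul_comm, mul_vecMulVec, hv, trace_vecMulVec, zero_dotProduct]
  have hdiag (p : Fin n) : cpExt Ψ 2 (vecMulVec z (star z)) (p, 0) (p, 0) = 0 :=
    show Ψ (vecMulVec v (star v)) p p = 0 by simp [hvv]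
  refine ⟨?_, ?_⟩ <;> ext p q
  · exact hC.apply_eq_zero_of_diag_eq_zero' (hdiag p) (q, 1)
  · exact hC.apply_eq_zero_of_diag_eq_zero (hdiag q) (p, 1)

end IsCP

-- Unnormalized eigenvectors of `σ_x`.
def ketPlus : Fin 2 → ℂ := ![1, 1]

def ketMinus : Fin 2 → ℂ := ![1, -1]

theorem Pz_eq_diagonal : Pz = diagonal ![1, 0] := by
  ext i j; fin_cases i <;> fin_cases j <;> norm_num [Pz, sz]

theorem Pnz_eq_diagonal : Pnz = diagonal ![0, 1] := by
  ext i j; fin_cases i <;> fin_cases j <;> norm_num [Pnz, sz]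

theorem sz_eq_diagonal : sz = diagonal ![1, -1] := by
  ext i j; fin_cases i <;> fin_cases j <;> simp [sz]

theorem sqrtA_eq_diagonal : sqrtA = diagonal ![1, (Real.sqrt 2 : ℂ)⁻¹] := by
  ext i j; fin_cases i <;> fin_cases j <;> simp [sqrtA, Pz_eq_diagonal, Pnz_eq_diagonal]

theorem Px_eq : Px = !![1 / 2, 1 / 2; 1 / 2, 1 / 2] := by
  ext i j; fin_cases i <;> fin_cases j <;> norm_num [Px, sx]

theorem Px_mulVec_ketMinus : Px *ᵥ ketMinus = 0 := by
  ext i; fin_cases i <;> simp [Px_eq, ketMinus]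

theorem one_sub_Px_mulVec_ketPlus : (1 - Px) *ᵥ ketPlus = 0 := by
  ext i; fin_cases i <;> simp [Px_eq, ketPlus, one_fin_two] <;> norm_num

theorem sz_eq_vecMulVec :
    sz = (1 / 2 : ℂ) • (vecMulVec ketPlus (star ketMinus) + vecMulVec ketMinus (star ketPlus)) := by
  ext i j
  simp only [Matrix.smul_apply, Matrix.add_apply, vecMulVec_apply]
  fin_cases i <;> fin_cases j <;> simp [sz, ketPlus, ketMinus] <;> norm_num

theorem Pz_sub_Pnz : Pz - Pnz = sz := by
  simp [Pz_eq_diagonal, Pnz_eq_diagonal, sz_eq_diagonal, diagonal_sub]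

theorem Pz_posSemidef : Pz.PosSemidef := by
  simp [Pz_eq_diagonal, Fin.forall_fin_two]

theorem Pnz_posSemidef : Pnz.PosSemidef := by
  simp [Pnz_eq_diagonal, Fin.forall_fin_two]

theorem trace_Pz : Pz.trace = 1 := by
  simp [Pz_eq_diagonal]

theorem luders_sqrtA_Pz : luders sqrtA Pz = Pz := by
  simp [luders, sqrtA_eq_diagonal, Pz_eq_diagonal, diagonal_mul_diagonal]

theorem luders_sqrtA_Pnz : luders sqrtA Pnz = (1 / 2 : ℂ) • Pnz := by
  have hsq : ((Real.sqrt 2 : ℂ))⁻¹ * (Real.sqrt 2 : ℂ)⁻¹ = 1 / 2 := by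
    rw [← mul_inv, ← Complex.ofReal_mul, Real.mul_self_sqrt zero_le_two]; norm_num
  simp only [luders, LinearMap.comp_apply, LinearMap.mulLeft_apply, LinearMap.mulRight_apply,
    sqrtA_eq_diagonal, Pnz_eq_diagonal, diagonal_mul_diagonal, ← diagonal_smul]
  congr 1
  ext i; fin_cases i <;> simp [hsq]

theorem IsCP.map_sz_eq_zero {Ψ : Mat 2 →ₗ[ℂ] Mat 2} (hΨ : IsCP Ψ) {E : Mat 2}
    (hE : ∀ ρ, (Ψ ρ).trace = (ρ * E).trace) (hker : E *ᵥ ketPlus = 0 ∨ E *ᵥ ketMinus = 0) :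
    Ψ sz = 0 := by
  rcases hker with hker | hker
  · obtain ⟨h₁, h₂⟩ := hΨ.map_vecMulVec_eq_zero hE hker ketMinus
    simp [sz_eq_vecMulVec, h₁, h₂]
  · obtain ⟨h₁, h₂⟩ := hΨ.map_vecMulVec_eq_zero hE hker ketPlus
    simp [sz_eq_vecMulVec, h₁, h₂]

theorem three_halves_le_trace_of_posSemidef_sub {L : Mat 2} (hz : (L - Pz).PosSemidef)
    (hnz : (L - (1 / 2 : ℂ) • Pnz).PosSemidef) : (3 / 2 : ℂ) ≤ L.trace := by
  have h0 : 0 ≤ L 0 0 - 1 := by simpa [Pz_eq_diagonal] using hz.diag_nonneg (i := 0)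
  have h1 : 0 ≤ L 1 1 - 1 / 2 := by simpa [Pnz_eq_diagonal] using hnz.diag_nonneg (i := 1)
  rw [trace_fin_two]
  linear_combination h0 + h1

/-- The projection `P_x` and the Lüders operation `Φ(ρ) = A^{1/2} ρ A^{1/2}` of
`A = P_z + (1/2)P_{-z}` are strongly incompatible: there is no channel `Λ` and no
operation `Φ'` with `Φ'*(I) = P_x` such that `Λ` dominates both `Φ` and `Φ'`. -/
theorem Px_luders_strongly_incompatible :
    ¬ ∃ (Λ Φ' : Mat 2 →ₗ[ℂ] Mat 2),
        IsCP Λ ∧ (∀ ρ : Mat 2, (Λ ρ).trace = ρ.trace) ∧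
        IsCP Φ' ∧ (∀ ρ : Mat 2, (Φ' ρ).trace = (ρ * Px).trace) ∧
        IsCP (Λ - luders sqrtA) ∧ IsCP (Λ - Φ') := by
  rintro ⟨Λ, Φ', -, hΛtr, hΦ', hΦ'tr, hΛΦ, hΛΦ'⟩
  have hrest (ρ : Mat 2) : ((Λ - Φ') ρ).trace = (ρ * (1 - Px)).trace := by
    rw [LinearMap.sub_apply, trace_sub, hΛtr, hΦ'tr, mul_sub, mul_one, trace_sub]
  have hΦ'sz : Φ' sz = 0 := hΦ'.map_sz_eq_zero hΦ'tr (.inr Px_mulVec_ketMinus)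
  have hrestsz : (Λ - Φ') sz = 0 := hΛΦ'.map_sz_eq_zero hrest (.inl one_sub_Px_mulVec_ketPlus)
  have hΛsz : Λ sz = 0 := by simpa [hΦ'sz] using hrestsz
  have hΛ_eq : Λ Pz = Λ Pnz := by rw [← sub_eq_zero, ← map_sub, Pz_sub_Pnz, hΛsz]
  have hz : (Λ Pz - Pz).PosSemidef := by
    simpa [luders_sqrtA_Pz] using hΛΦ.posSemidef_map Pz_posSemidef
  have hnz : (Λ Pz - (1 / 2 : ℂ) • Pnz).PosSemidef := by
    simpa [luders_sqrtA_Pnz, ← hΛ_eq] using hΛΦ.posSemidef_map Pnz_posSemidef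
  have h := three_halves_le_trace_of_posSemidef_sub hz hnz
  rw [hΛtr, trace_Pz] at h
  norm_num [Complex.le_def] at h
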